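/- arXiv:1805.00897 — 10 statements merged into one kernel-verified Lean document; each statement's English description precedes it below -/
import Mathlib

section
/- Let n₁ ≥ 1 landmark points p_1,…,p_{n₁} ∈ ℝ³, n₂ inertial vectors v_1,…,v_{n₂} ∈ ℝ³, and weights k_1,…,k_{n₁+n₂} > 0 be given, and define A := Σ_{i=1}^{n₁} k_i p_i p_iᵀ + Σ_{j=1}^{n₂} k_{n₁+j} v_j v_jᵀ, b := Σ_{i=1}^{n₁} k_i p_i, d := Σ_{i=1}^{n₁} k_i, p_c := b/d, v̄_i := p_i − p_c, and Q := A − b bᵀ d⁻¹. Then Q̄ := ½(tr(Q) I₃ − Q) satisfies Q̄ = −½ Σ_{i=1}^{n₁} k_i (v̄_i^×)² − ½ Σ_{j=1}^{n₂} k_{n₁+j} (v_j^×)², and if among the vectors {v̄_1,…,v̄_{n₁}, v_1,…,v_{n₂}} there exist two non-collinear vectors, then Q̄ is positive definite. -/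
open Matrix BigOperators

noncomputable section

abbrev V3 : Type := Fin 3 → ℝ
abbrev V4 : Type := (Fin 3 ⊕ Fin 1) → ℝ
abbrev V6 : Type := (Fin 3 → ℝ) × (Fin 3 → ℝ)
abbrev M3 : Type := Matrix (Fin 3) (Fin 3) ℝ
abbrev M4 : Type := Matrix (Fin 3 ⊕ Fin 1) (Fin 3 ⊕ Fin 1) ℝ

/-- cross product on ℝ³ -/
def cross (x y : V3) : V3 := crossProduct x y

/-- skew-symmetric matrix `x^×` with `x^× y = x × y` -/
def skew (x : V3) : M3 := !![0, -x 2, x 1; x 2, 0, -x 0; -x 1, x 0, 0]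

/-- rank-one matrix `x yᵀ` -/
def outer (x y : V3) : M3 := Matrix.vecMulVec x y

/-- `R` is a rotation matrix -/
def isRot (R : M3) : Prop := Rᵀ * R = 1 ∧ R.det = 1

def colV (p : V3) : Matrix (Fin 3) (Fin 1) ℝ := Matrix.of fun i _ => p i
def rowV (p : V3) : Matrix (Fin 1) (Fin 3) ℝ := Matrix.of fun _ j => p j

/-- homogeneous matrix `[R, p; 0, 1]` -/
def SE3mat (R : M3) (p : V3) : M4 := Matrix.fromBlocks R (colV p) 0 1

/-- membership in SE(3) -/
def inSE3 (g : M4) : Prop := ∃ R p, isRot R ∧ g = SE3mat R p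

/-- vector part of an element of ℝ⁴ -/
def vpart (r : V4) : V3 := fun i => r (Sum.inl i)
/-- scalar part of an element of ℝ⁴ -/
def spart (r : V4) : ℝ := r (Sum.inr 0)

/-- wedge product `b ∧ r := (b_v × r_v, b_s r_v − r_s b_v) ∈ ℝ⁶` -/
def wedge (b r : V4) : V6 :=
  (cross (vpart b) (vpart r), spart b • vpart r - spart r • vpart b)

/-- `ψ_a(A) := ½(a₃₂ − a₂₃, a₁₃ − a₃₁, a₂₁ − a₁₂)` -/
def psia (A : M3) : V3 :=
  ![(A 2 1 - A 1 2) / 2, (A 0 2 - A 2 0) / 2, (A 1 0 - A 0 1) / 2]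

/-- `ψ([A, b; c, d]) := (ψ_a(A), ½ b) ∈ ℝ⁶` -/
def psi (M : M4) : V6 :=
  (psia M.toBlocks₁₁, fun i => M (Sum.inl i) (Sum.inr 0) / 2)

/-- `ℙ([A, b; c, d]) := [(A − Aᵀ)/2, b; 0, 0]` -/
def Pproj (M : M4) : M4 :=
  Matrix.fromBlocks ((1 / 2 : ℝ) • (M.toBlocks₁₁ - M.toBlocks₁₁ᵀ)) M.toBlocks₁₂ 0 0

/-- `Ad*_g = [Rᵀ, −Rᵀ p^×; 0, Rᵀ]` acting on ℝ⁶, for `g = [R, p; 0, 1]` -/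
def AdStar (g : M4) (ξ : V6) : V6 :=
  ((g.toBlocks₁₁)ᵀ.mulVec (ξ.1 - cross (fun i => g (Sum.inl i) (Sum.inr 0)) ξ.2),
   (g.toBlocks₁₁)ᵀ.mulVec ξ.2)

/-- `(ω, v)^∧ := [ω^×, v; 0, 0]` -/
def hat (ξ : V6) : M4 := Matrix.fromBlocks (skew ξ.1) (colV ξ.2) 0 0

/-- squared Euclidean norm on ℝ³ -/
def sq3 (x : V3) : ℝ := ∑ i, x i ^ 2
/-- squared Euclidean norm on ℝ⁴ -/
def sq4 (x : V4) : ℝ := ∑ i, x i ^ 2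
/-- squared Euclidean norm on ℝ⁶ -/
def sq6 (ξ : V6) : ℝ := sq3 ξ.1 + sq3 ξ.2
/-- squared Frobenius norm of a 4×4 matrix -/
def frob4 (M : M4) : ℝ := ∑ i, ∑ j, M i j ^ 2
/-- squared Frobenius norm of a 3×3 matrix -/
def frob3 (M : M3) : ℝ := ∑ i, ∑ j, M i j ^ 2

/-- membership in `𝓜₀` (last row zero, block form `[M₁, m₂; 0, 0]`) -/
def inM0 (M : M4) : Prop := ∃ (M₁ : M3) (m₂ : V3), M = Matrix.fromBlocks M₁ (colV m₂) 0 0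

/-- `Δ_Q(u, v) := uᵀ((tr(Q) − 2 vᵀQv) I₃ − Q + 2 Q v vᵀ) u` -/
def DeltaQ (Q : M3) (u v : V3) : ℝ :=
  u ⬝ᵥ Matrix.mulVec
    ((Q.trace - 2 * (v ⬝ᵥ Q.mulVec v)) • (1 : M3) - Q + (2 : ℝ) • (Q * outer v v)) u

/-- angle-axis rotation `R_a(θ, u) = I₃ + sin θ · u^× + (1 − cos θ)(u^×)²` -/
def Ra (θ : ℝ) (u : V3) : M3 :=
  1 + Real.sin θ • skew u + (1 - Real.cos θ) • (skew u * skew u)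

lemma skew_sq (u : V3) : skew u * skew u = outer u u - sq3 u • (1 : M3) := by
  ext i j
  fin_cases i <;> fin_cases j <;>
    simp [skew, outer, sq3, Matrix.mul_apply, Fin.sum_univ_three, Matrix.vecMulVec_apply,
      Matrix.one_apply] <;> ring

lemma trace_outer (u : V3) : (outer u u).trace = sq3 u := by
  simp [Matrix.trace, outer, sq3, Fin.sum_univ_three, Matrix.vecMulVec_apply, sq]

lemma dot_skewsq (u x : V3) : x ⬝ᵥ (skew u * skew u).mulVec x = -(sq3 (cross u x)) := by
  simp [cross, crossProduct, sq3, skew, Matrix.mulVec, Matrix.mul_apply, dotProduct,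
    Fin.sum_univ_three]
  ring

lemma sq3_nonneg (u : V3) : 0 ≤ sq3 u := Finset.sum_nonneg fun i _ => sq_nonneg _

lemma sq3_pos (u : V3) (h : u ≠ 0) : 0 < sq3 u := by
  rcases Function.ne_iff.mp h with ⟨i, hi⟩
  have : 0 < u i ^ 2 := pow_two_pos_of_ne_zero hi
  calc (0:ℝ) < u i ^ 2 := this
    _ ≤ sq3 u := Finset.single_le_sum (fun j _ => sq_nonneg (u j)) (Finset.mem_univ i)

lemma cross_eq_zero (u x : V3) (hx : x ≠ 0) (h : cross u x = 0) : ∃ t : ℝ, u = t • x := by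
  have h0 := congrFun h 0
  have h1 := congrFun h 1
  have h2 := congrFun h 2
  simp [cross, crossProduct] at h0 h1 h2
  rcases Function.ne_iff.mp hx with ⟨i, hi⟩
  fin_cases i
  · have hx0 : x 0 ≠ 0 := by simpa using hi
    refine ⟨u 0 / x 0, funext fun j => ?_⟩
    simp only [Pi.smul_apply, smul_eq_mul]
    rw [div_mul_eq_mul_div, eq_div_iff hx0]
    fin_cases j
    · show u 0 * x 0 = u 0 * x 0
      ring
    · show u 1 * x 0 = u 0 * x 1
      linarith
    · show u 2 * x 0 = u 0 * x 2
      linarith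
  · have hx1 : x 1 ≠ 0 := by simpa using hi
    refine ⟨u 1 / x 1, funext fun j => ?_⟩
    simp only [Pi.smul_apply, smul_eq_mul]
    rw [div_mul_eq_mul_div, eq_div_iff hx1]
    fin_cases j
    · show u 0 * x 1 = u 1 * x 0
      linarith
    · show u 1 * x 1 = u 1 * x 1
      ring
    · show u 2 * x 1 = u 1 * x 2
      linarith
  · have hx2 : x 2 ≠ 0 := by simpa using hi
    refine ⟨u 2 / x 2, funext fun j => ?_⟩
    simp only [Pi.smul_apply, smul_eq_mul]
    rw [div_mul_eq_mul_div, eq_div_iff hx2]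
    fin_cases j
    · show u 0 * x 2 = u 2 * x 0
      linarith
    · show u 1 * x 2 = u 2 * x 1
      linarith
    · show u 2 * x 2 = u 2 * x 2
      ring
lemma sum_mulVec3 {ι : Type*} (s : Finset ι) (M : ι → M3) (x : V3) :
    (∑ i ∈ s, M i).mulVec x = ∑ i ∈ s, (M i).mulVec x := by
  funext j
  simp only [Matrix.mulVec, dotProduct, Matrix.sum_apply, Finset.sum_apply, Finset.sum_mul]
  exact Finset.sum_comm

lemma dot_sum3 {ι : Type*} (s : Finset ι) (f : ι → V3) (x : V3) :
    x ⬝ᵥ (∑ i ∈ s, f i) = ∑ i ∈ s, x ⬝ᵥ f i := by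
  simp only [dotProduct, Finset.sum_apply, Finset.mul_sum]
  exact Finset.sum_comm

theorem stmt1 (n₁ n₂ : ℕ) (hn₁ : 1 ≤ n₁)
    (p : Fin n₁ → V3) (v : Fin n₂ → V3) (k : Fin (n₁ + n₂) → ℝ)
    (hk : ∀ i, 0 < k i)
    (A : M3) (hA : A = (∑ i : Fin n₁, k (Fin.castAdd n₂ i) • outer (p i) (p i))
      + ∑ j : Fin n₂, k (Fin.natAdd n₁ j) • outer (v j) (v j))
    (b : V3) (hb : b = ∑ i : Fin n₁, k (Fin.castAdd n₂ i) • p i)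
    (d : ℝ) (hd : d = ∑ i : Fin n₁, k (Fin.castAdd n₂ i))
    (pc : V3) (hpc : pc = d⁻¹ • b)
    (vbar : Fin n₁ → V3) (hvbar : ∀ i, vbar i = p i - pc)
    (Q : M3) (hQ : Q = A - d⁻¹ • outer b b)
    (Qbar : M3) (hQbar : Qbar = (1 / 2 : ℝ) • (Q.trace • (1 : M3) - Q))
    (w : Fin n₁ ⊕ Fin n₂ → V3) (hw : w = Sum.elim vbar v) :
    (Qbar = -((1 / 2 : ℝ) • ∑ i : Fin n₁,
        k (Fin.castAdd n₂ i) • (skew (vbar i) * skew (vbar i)))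
      - (1 / 2 : ℝ) • ∑ j : Fin n₂,
        k (Fin.natAdd n₁ j) • (skew (v j) * skew (v j)))
    ∧ ((∃ a c : Fin n₁ ⊕ Fin n₂,
          (¬ ∃ t : ℝ, w a = t • w c) ∧ (¬ ∃ t : ℝ, w c = t • w a)) →
        ∀ x : V3, x ≠ 0 → 0 < x ⬝ᵥ Qbar.mulVec x) := by
  haveI : Nonempty (Fin n₁) := ⟨⟨0, hn₁⟩⟩
  have hdpos : 0 < d := by
    rw [hd]; exact Finset.sum_pos (fun i _ => hk _) Finset.univ_nonempty
  have hdne : d ≠ 0 := ne_of_gt hdpos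
  have hQsum : Q = (∑ i : Fin n₁, k (Fin.castAdd n₂ i) • outer (vbar i) (vbar i))
      + ∑ j : Fin n₂, k (Fin.natAdd n₁ j) • outer (v j) (v j) := by
    rw [hQ, hA]
    have key : ∑ i : Fin n₁, k (Fin.castAdd n₂ i) • outer (vbar i) (vbar i)
        = (∑ i : Fin n₁, k (Fin.castAdd n₂ i) • outer (p i) (p i)) - d⁻¹ • outer b b := by
      ext r s
      simp only [Matrix.sum_apply, Matrix.sub_apply, Matrix.smul_apply, outer,
        Matrix.vecMulVec_apply, smul_eq_mul, hvbar, Pi.sub_apply, hpc, Pi.smul_apply]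
      have hbr : b r = ∑ i : Fin n₁, k (Fin.castAdd n₂ i) * p i r := by
        rw [hb]; simp [Finset.sum_apply]
      have hbs : b s = ∑ i : Fin n₁, k (Fin.castAdd n₂ i) * p i s := by
        rw [hb]; simp [Finset.sum_apply]
      have expand : ∀ i : Fin n₁, k (Fin.castAdd n₂ i) * ((p i r - d⁻¹ * b r) * (p i s - d⁻¹ * b s))
          = k (Fin.castAdd n₂ i) * (p i r * p i s)
            - (d⁻¹ * b s) * (k (Fin.castAdd n₂ i) * p i r)
            - (d⁻¹ * b r) * (k (Fin.castAdd n₂ i) * p i s)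
            + ((d⁻¹ * b r) * (d⁻¹ * b s)) * k (Fin.castAdd n₂ i) := fun i => by ring
      rw [Finset.sum_congr rfl (fun i _ => expand i), Finset.sum_add_distrib,
        Finset.sum_sub_distrib, Finset.sum_sub_distrib, ← Finset.mul_sum, ← Finset.mul_sum,
        ← Finset.mul_sum, ← hbr, ← hbs, ← hd]
      field_simp
      ring
    rw [key]; abel
  have htr : Q.trace = (∑ i : Fin n₁, k (Fin.castAdd n₂ i) * sq3 (vbar i))
      + ∑ j : Fin n₂, k (Fin.natAdd n₁ j) * sq3 (v j) := by
    rw [hQsum]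
    simp [Matrix.trace_add, Matrix.trace_sum, Matrix.trace_smul, trace_outer, smul_eq_mul]
  have hQb : Qbar = -((1 / 2 : ℝ) • ∑ i : Fin n₁,
        k (Fin.castAdd n₂ i) • (skew (vbar i) * skew (vbar i)))
      - (1 / 2 : ℝ) • ∑ j : Fin n₂,
        k (Fin.natAdd n₁ j) • (skew (v j) * skew (v j)) := by
    rw [hQbar, htr, hQsum]
    simp only [skew_sq, smul_sub, Finset.sum_sub_distrib, smul_smul, ← Finset.sum_smul]
    module
  refine ⟨hQb, ?_⟩
  rintro ⟨a, c, hac1, hac2⟩ x hx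
  have hform : x ⬝ᵥ Qbar.mulVec x
      = (1/2 : ℝ) * ((∑ i : Fin n₁, k (Fin.castAdd n₂ i) * sq3 (cross (vbar i) x))
        + ∑ j : Fin n₂, k (Fin.natAdd n₁ j) * sq3 (cross (v j) x)) := by
    rw [hQb]
    simp only [Matrix.sub_mulVec, Matrix.neg_mulVec, Matrix.smul_mulVec,
      sum_mulVec3, dotProduct_sub, dotProduct_neg, dotProduct_smul, dot_sum3,
      dot_skewsq, smul_eq_mul, mul_neg, neg_neg, Finset.sum_neg_distrib]
    ring
  have hnz : cross (w a) x ≠ 0 ∨ cross (w c) x ≠ 0 := by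
    by_contra hcon
    push_neg at hcon
    obtain ⟨t, ht⟩ := cross_eq_zero _ _ hx hcon.1
    obtain ⟨s, hs⟩ := cross_eq_zero _ _ hx hcon.2
    by_cases h0 : s = 0
    · exact hac2 ⟨0, by rw [hs, h0]; simp⟩
    · refine hac1 ⟨t / s, ?_⟩
      rw [ht, hs, smul_smul]
      congr 1
      field_simp
  set F : Fin n₁ ⊕ Fin n₂ → ℝ := Sum.elim
      (fun i => k (Fin.castAdd n₂ i) * sq3 (cross (vbar i) x))
      (fun j => k (Fin.natAdd n₁ j) * sq3 (cross (v j) x)) with hF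
  have hsum : (∑ i : Fin n₁, k (Fin.castAdd n₂ i) * sq3 (cross (vbar i) x))
      + ∑ j : Fin n₂, k (Fin.natAdd n₁ j) * sq3 (cross (v j) x)
      = ∑ m : Fin n₁ ⊕ Fin n₂, F m := by
    rw [Fintype.sum_sum_type]; rfl
  have hnonneg : ∀ m ∈ Finset.univ, 0 ≤ F m := by
    rintro (i | j) _ <;> exact mul_nonneg (le_of_lt (hk _)) (sq3_nonneg _)
  have hposm : ∃ m ∈ Finset.univ, 0 < F m := by
    rcases hnz with hna | hnc
    · refine ⟨a, Finset.mem_univ _, ?_⟩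
      rcases a with i | j
      · exact mul_pos (hk _) (sq3_pos _ (by simpa [hw] using hna))
      · exact mul_pos (hk _) (sq3_pos _ (by simpa [hw] using hna))
    · refine ⟨c, Finset.mem_univ _, ?_⟩
      rcases c with i | j
      · exact mul_pos (hk _) (sq3_pos _ (by simpa [hw] using hnc))
      · exact mul_pos (hk _) (sq3_pos _ (by simpa [hw] using hnc))
  have hp := Finset.sum_pos' hnonneg hposm
  rw [hform, hsum]
  linarith
end
end

section
/- Let Q be a symmetric positive semidefinite 3×3 real matrix with an orthonormal eigenbasis u₁, u₂, u₃ and corresponding eigenvalues λ₁, λ₂, λ₃, and let 𝕌 ⊆ 𝕊² be a finite set of unit vectors with {u₁, u₂, u₃} ⊆ 𝕌. Then for every unit eigenvector v of Q there exists u ∈ 𝕌 with Δ_Q(u, v) ≥ c, where: c = (2/3)λ₁ if λ₁ = λ₂ = λ₃ > 0; c = min{λ₁ + λ₂, λ₃} if λ₁ = λ₂ ≠ λ₃ and all three eigenvalues are positive; and c = tr(Q) − max{λ₁, λ₂, λ₃} if the three eigenvalues are pairwise distinct (and nonnegative). -/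
open Matrix BigOperators

noncomputable section

theorem stmt2 (Q : M3) (hsym : Qᵀ = Q) (hpsd : ∀ x : V3, 0 ≤ x ⬝ᵥ Q.mulVec x)
    (u : Fin 3 → V3) (lam : Fin 3 → ℝ)
    (horth : ∀ i j, u i ⬝ᵥ u j = if i = j then 1 else 0)
    (heig : ∀ i, Q.mulVec (u i) = lam i • u i)
    (U : Finset V3) (hUunit : ∀ w ∈ U, w ⬝ᵥ w = 1)
    (hsub : ∀ i, u i ∈ U)
    (v : V3) (hv : v ⬝ᵥ v = 1) (μ : ℝ) (hμ : Q.mulVec v = μ • v) :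
    ((lam 0 = lam 1 ∧ lam 1 = lam 2 ∧ 0 < lam 0) →
      ∃ w ∈ U, (2 / 3 : ℝ) * lam 0 ≤ DeltaQ Q w v) ∧
    ((lam 0 = lam 1 ∧ lam 1 ≠ lam 2 ∧ (∀ i, 0 < lam i)) →
      ∃ w ∈ U, min (lam 0 + lam 1) (lam 2) ≤ DeltaQ Q w v) ∧
    (((∀ i j, i ≠ j → lam i ≠ lam j) ∧ (∀ i, 0 ≤ lam i)) →
      ∃ w ∈ U, Q.trace - max (max (lam 0) (lam 1)) (lam 2) ≤ DeltaQ Q w v) := by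
  classical
  set c : Fin 3 → ℝ := fun i => u i ⬝ᵥ v with hcdef
  have hsymdot : ∀ x y : V3, x ⬝ᵥ Q.mulVec y = Q.mulVec x ⬝ᵥ y := by
    intro x y
    rw [Matrix.dotProduct_mulVec, ← Matrix.vecMul_transpose, hsym]
  have hC : ∀ i, lam i * c i = μ * c i := by
    intro i
    have h1 : u i ⬝ᵥ Q.mulVec v = μ * c i := by
      rw [hμ, dotProduct_smul, smul_eq_mul]
    have h2 : u i ⬝ᵥ Q.mulVec v = lam i * c i := by
      rw [hsymdot, heig, smul_dotProduct, smul_eq_mul]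
    rw [← h1, ← h2]
  set P : M3 := Matrix.of (fun i j => u i j) with hPdef
  have hPPT : P * Pᵀ = 1 := by
    ext i j
    have h := horth i j
    simp only [dotProduct] at h
    simp [Matrix.mul_apply, Matrix.one_apply, hPdef, h]
  have hPTP : Pᵀ * P = 1 := mul_eq_one_comm.mp hPPT
  have hPv : P.mulVec v = c := by
    ext i
    simp [Matrix.mulVec, dotProduct, hPdef, hcdef]
  have hB : c 0 ^ 2 + c 1 ^ 2 + c 2 ^ 2 = 1 := by
    have h1 : v ⬝ᵥ (Pᵀ * P).mulVec v = 1 := by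
      rw [hPTP, Matrix.one_mulVec, hv]
    rw [← Matrix.mulVec_mulVec, Matrix.dotProduct_mulVec, Matrix.vecMul_transpose,
      hPv] at h1
    simpa [dotProduct, Fin.sum_univ_three, sq] using h1
  have htr : Q.trace = lam 0 + lam 1 + lam 2 := by
    have h1 : (P * (Q * Pᵀ)).trace = Q.trace := by
      rw [← Matrix.mul_assoc, Matrix.trace_mul_comm, ← Matrix.mul_assoc, hPTP, Matrix.one_mul]
    have hQPT : ∀ (k : Fin 3) (i : Fin 3), (Q * Pᵀ) k i = Q.mulVec (u i) k := by
      intro k i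
      simp [Matrix.mul_apply, Matrix.mulVec, dotProduct, hPdef]
    have hdiag : ∀ i : Fin 3, (P * (Q * Pᵀ)) i i = lam i := by
      intro i
      have : (P * (Q * Pᵀ)) i i = u i ⬝ᵥ Q.mulVec (u i) := by
        rw [Matrix.mul_apply]
        simp only [hQPT]
        simp [dotProduct, hPdef]
      rw [this, heig, dotProduct_smul, smul_eq_mul, horth i i]
      simp
    rw [← h1, Matrix.trace]
    simp [Matrix.diag, Fin.sum_univ_three, hdiag]
  have hμv : v ⬝ᵥ Q.mulVec v = μ := by
    rw [hμ, dotProduct_smul, smul_eq_mul, hv, mul_one]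
  have hDelta : ∀ i, DeltaQ Q (u i) v = Q.trace - 2 * μ - lam i + 2 * μ * (c i) ^ 2 := by
    intro i
    have houter : (outer v v).mulVec (u i) = (c i) • v := by
      ext k
      simp only [outer, Matrix.mulVec, Matrix.vecMulVec_apply, dotProduct,
        Pi.smul_apply, smul_eq_mul]
      rw [show c i = ∑ j, u i j * v j from by simp [hcdef, dotProduct]]
      rw [Finset.sum_mul]
      exact Finset.sum_congr rfl fun j _ => by ring
    have hmv : Matrix.mulVec ((Q.trace - 2 * (v ⬝ᵥ Q.mulVec v)) • (1 : M3) - Q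
        + (2 : ℝ) • (Q * outer v v)) (u i)
        = (Q.trace - 2 * μ) • u i - lam i • u i + (2 * (c i) * μ) • v := by
      rw [Matrix.add_mulVec, Matrix.sub_mulVec, Matrix.smul_mulVec,
        Matrix.one_mulVec, Matrix.smul_mulVec, ← Matrix.mulVec_mulVec,
        houter, Matrix.mulVec_smul, hμ, heig]
      ext k
      simp [dotProduct_smul, smul_eq_mul, hv, smul_smul]
      exact Or.inl (by ring)
    rw [DeltaQ, hmv]
    rw [dotProduct_add, dotProduct_sub, dotProduct_smul, dotProduct_smul, dotProduct_smul,
      horth i i]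
    have : u i ⬝ᵥ v = c i := rfl
    simp [this]
    ring
  refine ⟨?_, ?_, ?_⟩
  · rintro ⟨h01, h12, hpos⟩
    have hμeq : μ = lam 0 := by
      by_contra hne
      have hz : ∀ i, c i = 0 := by
        intro i
        have h := hC i
        have hli : lam i = lam 0 := by
          fin_cases i
          · rfl
          · exact h01.symm
          · exact (h01.trans h12).symm
        rw [hli] at h
        by_contra hczero
        exact hne ((mul_right_cancel₀ hczero h).symm)
      have := hB
      rw [hz 0, hz 1, hz 2] at this
      norm_num at this
    have hkey : c 0 ^ 2 ≥ 1/3 ∨ c 1 ^ 2 ≥ 1/3 ∨ c 2 ^ 2 ≥ 1/3 := by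
      by_contra h
      push_neg at h
      nlinarith [h.1, h.2.1, h.2.2]
    rcases hkey with h | h | h
    · exact ⟨u 0, hsub 0, by rw [hDelta 0, htr, hμeq]; nlinarith⟩
    · exact ⟨u 1, hsub 1, by rw [hDelta 1, htr, hμeq]; nlinarith⟩
    · exact ⟨u 2, hsub 2, by rw [hDelta 2, htr, hμeq]; nlinarith⟩
  · rintro ⟨h01, hne12, hpos⟩
    by_cases hc2 : c 2 = 0
    · have hμ0 : μ = lam 0 := by
        by_contra hne
        have hz0 : c 0 = 0 := by
          have h := hC 0
          by_contra hcz
          exact hne ((mul_right_cancel₀ hcz h).symm)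
        have hz1 : c 1 = 0 := by
          have h := hC 1
          rw [← h01] at h
          by_contra hcz
          exact hne ((mul_right_cancel₀ hcz h).symm)
        rw [hz0, hz1, hc2] at hB
        norm_num at hB
      have hsum01 : c 0 ^ 2 + c 1 ^ 2 = 1 := by
        rw [hc2] at hB; simpa using hB
      have hmin2 : min (lam 0 + lam 1) (lam 2) ≤ lam 2 := min_le_right _ _
      rcases le_or_gt (1/2 : ℝ) (c 0 ^ 2) with h | h
      · exact ⟨u 0, hsub 0, by rw [hDelta 0, htr, hμ0]; nlinarith [hmin2, mul_le_mul_of_nonneg_left h (hpos 0).le]⟩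
      · have h1 : (1/2 : ℝ) ≤ c 1 ^ 2 := by linarith
        exact ⟨u 1, hsub 1, by rw [hDelta 1, htr, hμ0]; nlinarith [hmin2, h01, mul_le_mul_of_nonneg_left h1 (hpos 0).le]⟩
    · have hμ2 : μ = lam 2 := (mul_right_cancel₀ hc2 (hC 2)).symm
      have hz0 : c 0 = 0 := by
        have h := hC 0
        rw [hμ2] at h
        by_contra hcz
        exact hne12 (by rw [← h01]; exact mul_right_cancel₀ hcz h)
      have hz1 : c 1 = 0 := by
        have h := hC 1
        rw [hμ2] at h
        by_contra hcz
        exact hne12 (mul_right_cancel₀ hcz h)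
      have hc2sq : c 2 ^ 2 = 1 := by
        rw [hz0, hz1] at hB; simpa using hB
      have hmin1 : min (lam 0 + lam 1) (lam 2) ≤ lam 0 + lam 1 := min_le_left _ _
      exact ⟨u 2, hsub 2, by rw [hDelta 2, htr, hμ2, hc2sq]; nlinarith⟩
  · rintro ⟨hdist, hnn⟩
    have hex : c 0 ≠ 0 ∨ c 1 ≠ 0 ∨ c 2 ≠ 0 := by
      by_contra h
      push_neg at h
      rw [h.1, h.2.1, h.2.2] at hB
      norm_num at hB
    set M : ℝ := max (max (lam 0) (lam 1)) (lam 2) with hM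
    have hM0 : lam 0 ≤ M := le_trans (le_max_left _ _) (le_max_left _ _)
    have hM1 : lam 1 ≤ M := le_trans (le_max_right _ _) (le_max_left _ _)
    have hM2 : lam 2 ≤ M := le_max_right _ _
    rcases hex with h | h | h
    · have hμ0 : μ = lam 0 := (mul_right_cancel₀ h (hC 0)).symm
      have hz1 : c 1 = 0 := by
        have hcc := hC 1; rw [hμ0] at hcc
        by_contra hcz
        exact hdist 1 0 (by decide) (mul_right_cancel₀ hcz hcc)
      have hz2 : c 2 = 0 := by
        have hcc := hC 2; rw [hμ0] at hcc
        by_contra hcz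
        exact hdist 2 0 (by decide) (mul_right_cancel₀ hcz hcc)
      have hcsq : c 0 ^ 2 = 1 := by rw [hz1, hz2] at hB; simpa using hB
      exact ⟨u 0, hsub 0, by rw [hDelta 0, hμ0, hcsq]; linarith [hM0]⟩
    · have hμ1 : μ = lam 1 := (mul_right_cancel₀ h (hC 1)).symm
      have hz0 : c 0 = 0 := by
        have hcc := hC 0; rw [hμ1] at hcc
        by_contra hcz
        exact hdist 0 1 (by decide) (mul_right_cancel₀ hcz hcc)
      have hz2 : c 2 = 0 := by
        have hcc := hC 2; rw [hμ1] at hcc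
        by_contra hcz
        exact hdist 2 1 (by decide) (mul_right_cancel₀ hcz hcc)
      have hcsq : c 1 ^ 2 = 1 := by rw [hz0, hz2] at hB; simpa using hB
      exact ⟨u 1, hsub 1, by rw [hDelta 1, hμ1, hcsq]; linarith [hM1]⟩
    · have hμ2 : μ = lam 2 := (mul_right_cancel₀ h (hC 2)).symm
      have hz0 : c 0 = 0 := by
        have hcc := hC 0; rw [hμ2] at hcc
        by_contra hcz
        exact hdist 0 2 (by decide) (mul_right_cancel₀ hcz hcc)
      have hz1 : c 1 = 0 := by
        have hcc := hC 1; rw [hμ2] at hcc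
        by_contra hcz
        exact hdist 1 2 (by decide) (mul_right_cancel₀ hcz hcc)
      have hcsq : c 2 ^ 2 = 1 := by rw [hz0, hz1] at hB; simpa using hB
      exact ⟨u 2, hsub 2, by rw [hDelta 2, hμ2, hcsq]; linarith [hM2]⟩
end
end

section
/- Let Q be a symmetric positive semidefinite 3×3 real matrix with largest eigenvalue λ_max such that tr(Q) − 2λ_max > 0, and let 𝕌 ⊆ 𝕊² be a finite set of unit vectors containing three mutually orthogonal unit vectors u₁, u₂, u₃. Then for every unit eigenvector v of Q there exists u ∈ 𝕌 with Δ_Q(u, v) ≥ (2/3)(tr(Q) − 2λ_max). -/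
open Matrix BigOperators

noncomputable section

lemma delta_formula (Q : M3) (μ : ℝ) (v w : V3) (hv : v ⬝ᵥ v = 1)
    (hμ : Q.mulVec v = μ • v) :
    DeltaQ Q w v = (Q.trace - 2 * μ) * (w ⬝ᵥ w) - w ⬝ᵥ Q.mulVec w
      + 2 * μ * (v ⬝ᵥ w) ^ 2 := by
  have h0 := congrFun hμ 0
  have h1 := congrFun hμ 1
  have h2 := congrFun hμ 2
  simp [Matrix.mulVec, dotProduct, Fin.sum_univ_three] at h0 h1 h2
  simp only [DeltaQ, outer, Matrix.mulVec, Matrix.vecMulVec, dotProduct,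
    Matrix.trace, Matrix.diag, Fin.sum_univ_three, Matrix.mul_apply,
    Matrix.one_apply, Matrix.sub_apply, Matrix.add_apply, Matrix.smul_apply,
    Matrix.of_apply, smul_eq_mul]
  simp only [dotProduct, Fin.sum_univ_three] at hv
  norm_num [Fin.ext_iff]
  linear_combination
    (-2 * (w 0 ^ 2 + w 1 ^ 2 + w 2 ^ 2)) * (v 0 * h0 + v 1 * h1 + v 2 * h2)
    + 2 * (v 0 * w 0 + v 1 * w 1 + v 2 * w 2) * (w 0 * h0 + w 1 * h1 + w 2 * h2)
    + (-2 * μ * (w 0 ^ 2 + w 1 ^ 2 + w 2 ^ 2)) * hv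

theorem stmt3 (Q : M3) (hsym : Qᵀ = Q) (hpsd : ∀ x : V3, 0 ≤ x ⬝ᵥ Q.mulVec x)
    (lmax : ℝ)
    (hlmax_eig : ∃ w : V3, w ≠ 0 ∧ Q.mulVec w = lmax • w)
    (hlmax_max : ∀ (μ : ℝ) (w : V3), w ≠ 0 → Q.mulVec w = μ • w → μ ≤ lmax)
    (htr : 0 < Q.trace - 2 * lmax)
    (U : Finset V3) (hUunit : ∀ w ∈ U, w ⬝ᵥ w = 1)
    (u : Fin 3 → V3) (huu : ∀ i, u i ⬝ᵥ u i = 1)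
    (huo : ∀ i j, i ≠ j → u i ⬝ᵥ u j = 0)
    (hum : ∀ i, u i ∈ U)
    (v : V3) (hv : v ⬝ᵥ v = 1) (μ : ℝ) (hμ : Q.mulVec v = μ • v) :
    ∃ w ∈ U, (2 / 3 : ℝ) * (Q.trace - 2 * lmax) ≤ DeltaQ Q w v := by
  have hv0 : v ≠ 0 := by
    intro h; rw [h] at hv; simp at hv
  have hmle : μ ≤ lmax := hlmax_max μ v hv0 hμ
  -- orthonormality of rows gives orthonormality of columns
  set A : M3 := Matrix.of u with hAdef
  have hA : A * Aᵀ = 1 := by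
    ext i j
    have : (A * Aᵀ) i j = u i ⬝ᵥ u j := by
      simp [Matrix.mul_apply, dotProduct, hAdef]
    rw [this]
    by_cases h : i = j
    · subst h; simp [huu i, Matrix.one_apply]
    · simp [huo i j h, Matrix.one_apply, h]
  have hA2 : Aᵀ * A = 1 := mul_eq_one_comm.mp hA
  have hsum : ∀ j k : Fin 3,
      u 0 j * u 0 k + u 1 j * u 1 k + u 2 j * u 2 k
        = if j = k then (1 : ℝ) else 0 := by
    intro j k
    have := congrFun (congrFun hA2 j) k
    simpa [Matrix.mul_apply, Fin.sum_univ_three, Matrix.one_apply, hAdef] using this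
  -- sum of u_i^T Q u_i = trace Q
  have htrsum : ∑ i : Fin 3, (u i ⬝ᵥ Q.mulVec (u i)) = Q.trace := by
    have h00 := hsum 0 0; have h01 := hsum 0 1; have h02 := hsum 0 2
    have h10 := hsum 1 0; have h11 := hsum 1 1; have h12 := hsum 1 2
    have h20 := hsum 2 0; have h21 := hsum 2 1; have h22 := hsum 2 2
    norm_num [Fin.ext_iff] at h00 h01 h02 h10 h11 h12 h20 h21 h22
    simp only [dotProduct, Matrix.mulVec, Matrix.trace, Matrix.diag,
      Fin.sum_univ_three]
    linear_combination Q 0 0 * h00 + Q 0 1 * h01 + Q 0 2 * h02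
      + Q 1 0 * h10 + Q 1 1 * h11 + Q 1 2 * h12
      + Q 2 0 * h20 + Q 2 1 * h21 + Q 2 2 * h22
  -- sum of (v ⬝ u_i)^2 = 1
  have hvsum : ∑ i : Fin 3, (v ⬝ᵥ u i) ^ 2 = 1 := by
    have h00 := hsum 0 0; have h01 := hsum 0 1; have h02 := hsum 0 2
    have h11 := hsum 1 1; have h12 := hsum 1 2; have h22 := hsum 2 2
    norm_num [Fin.ext_iff] at h00 h01 h02 h11 h12 h22
    simp only [dotProduct, Fin.sum_univ_three] at hv ⊢
    linear_combination v 0 ^ 2 * h00 + 2 * v 0 * v 1 * h01 + 2 * v 0 * v 2 * h02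
      + v 1 ^ 2 * h11 + 2 * v 1 * v 2 * h12 + v 2 ^ 2 * h22 + hv
  -- total sum of Delta's
  have hdsum : ∑ i : Fin 3, DeltaQ Q (u i) v = 2 * Q.trace - 4 * μ := by
    have : ∀ i : Fin 3, DeltaQ Q (u i) v
        = (Q.trace - 2 * μ) - (u i ⬝ᵥ Q.mulVec (u i)) + 2 * μ * (v ⬝ᵥ u i) ^ 2 := by
      intro i
      rw [delta_formula Q μ v (u i) hv hμ, huu i, mul_one]
    rw [Finset.sum_congr rfl (fun i _ => this i)]
    rw [Finset.sum_add_distrib, Finset.sum_sub_distrib, ← Finset.mul_sum, htrsum, hvsum]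
    simp; ring
  have hkey : ∑ _i : Fin 3, (2 / 3 : ℝ) * (Q.trace - 2 * lmax)
      ≤ ∑ i : Fin 3, DeltaQ Q (u i) v := by
    rw [hdsum, Finset.sum_const]
    simp only [Finset.card_univ, Fintype.card_fin, nsmul_eq_mul]
    linarith
  obtain ⟨i, _, hi⟩ := Finset.exists_le_of_sum_le ⟨0, Finset.mem_univ 0⟩ hkey
  exact ⟨u i, hum i, hi⟩
end
end

section
/- Let k_1,…,k_n > 0, r_1,…,r_n ∈ ℝ⁴ and 𝔸 := Σ_{i=1}^n k_i r_i r_iᵀ. Then for every g ∈ SE(3), ψ(ℙ((I₄ − g⁻¹) 𝔸)) = ½ Σ_{i=1}^n k_i (g⁻¹ r_i) ∧ r_i. -/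
open Matrix BigOperators

noncomputable section

lemma colV_mulVec (M : M3) (v : V3) : M * colV v = colV (M *ᵥ v) := by
  ext i j
  simp [colV, Matrix.mul_apply, Matrix.mulVec, dotProduct]

lemma colV_neg (v : V3) : colV (-v) = -colV v := by
  ext i j; simp [colV]

lemma mul_vecMulVec (M : M4) (x y : V4) :
    M * Matrix.vecMulVec x y = Matrix.vecMulVec (M *ᵥ x) y := by
  ext i j
  simp [Matrix.mul_apply, Matrix.vecMulVec_apply, Matrix.mulVec, dotProduct,
    Finset.sum_mul, add_mul, mul_assoc]

noncomputable def psiPL : M4 →ₗ[ℝ] V6 where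
  toFun M := psi (Pproj M)
  map_add' M N := by
    refine Prod.ext ?_ ?_ <;> funext i <;> fin_cases i <;>
      simp [psi, Pproj, psia, Matrix.toBlocks₁₁, Matrix.toBlocks₁₂] <;> ring
  map_smul' c M := by
    refine Prod.ext ?_ ?_ <;> funext i <;> fin_cases i <;>
      simp [psi, Pproj, psia, Matrix.toBlocks₁₁, Matrix.toBlocks₁₂] <;> ring

lemma per_term (a rr : V4) (hs : a (Sum.inr 0) = rr (Sum.inr 0)) :
    psi (Pproj (Matrix.vecMulVec (rr - a) rr)) = (1/2 : ℝ) • wedge a rr := by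
  refine Prod.ext ?_ ?_ <;> funext i <;> fin_cases i <;>
    simp [psi, Pproj, psia, wedge, cross, crossProduct, vpart, spart,
      Matrix.vecMulVec_apply, Matrix.toBlocks₁₁, Matrix.toBlocks₁₂] <;>
    (try rw [hs]) <;> ring

theorem stmt5 (n : ℕ) (k : Fin n → ℝ) (hk : ∀ i, 0 < k i) (r : Fin n → V4)
    (A : M4) (hA : A = ∑ i, k i • Matrix.vecMulVec (r i) (r i)) :
    ∀ g : M4, inSE3 g →
      psi (Pproj ((1 - g⁻¹) * A))
        = (1 / 2 : ℝ) • ∑ i, k i • wedge (g⁻¹.mulVec (r i)) (r i) := by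
  intro g hg
  obtain ⟨R, p, hR, rfl⟩ := hg
  have hRR : R * Rᵀ = 1 := mul_eq_one_comm.mp hR.1
  set h : M4 := SE3mat Rᵀ (-(Rᵀ *ᵥ p)) with hh
  have hinv : (SE3mat R p)⁻¹ = h := by
    apply Matrix.inv_eq_right_inv
    rw [hh]
    unfold SE3mat
    rw [Matrix.fromBlocks_multiply]
    rw [colV_neg, Matrix.mul_neg, colV_mulVec, Matrix.mulVec_mulVec, hRR,
      Matrix.one_mulVec]
    simp [hRR, Matrix.fromBlocks_one]
  rw [hinv, hA]
  have hs : ∀ i, (h *ᵥ r i) (Sum.inr 0) = r i (Sum.inr 0) := by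
    intro i
    simp [hh, SE3mat, Matrix.mulVec, dotProduct, Fintype.sum_sum_type,
      Matrix.fromBlocks]
  have step : (1 - h) * (∑ i, k i • Matrix.vecMulVec (r i) (r i))
      = ∑ i, k i • Matrix.vecMulVec (r i - h *ᵥ r i) (r i) := by
    rw [Finset.mul_sum]
    refine Finset.sum_congr rfl fun i _ => ?_
    rw [Matrix.mul_smul, mul_vecMulVec, Matrix.sub_mulVec, Matrix.one_mulVec]
  rw [step]
  have : psi (Pproj (∑ i, k i • Matrix.vecMulVec (r i - h *ᵥ r i) (r i)))
      = psiPL (∑ i, k i • Matrix.vecMulVec (r i - h *ᵥ r i) (r i)) := rfl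
  rw [this, map_sum]
  rw [Finset.smul_sum]
  refine Finset.sum_congr rfl fun i _ => ?_
  rw [_root_.map_smul]
  have h2 : psiPL (Matrix.vecMulVec (r i - h *ᵥ r i) (r i))
      = (1/2 : ℝ) • wedge (h *ᵥ r i) (r i) := per_term (h *ᵥ r i) (r i) (hs i)
  rw [h2, smul_comm]
end
end

section
/- Let k_1,…,k_n > 0 and r_1,…,r_n ∈ ℝ⁴. Then for all g, ḡ ∈ SE(3), Ad*_{ḡ} · (Σ_{i=1}^n k_i (ḡ g⁻¹ r_i) ∧ r_i) = Σ_{i=1}^n k_i (g⁻¹ r_i) ∧ (ḡ⁻¹ r_i). -/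
open Matrix BigOperators

noncomputable section

lemma cross_adj (A : M3) (x y : V3) :
    cross (A.mulVec x) (A.mulVec y) = (A.adjugate)ᵀ.mulVec (cross x y) := by
  funext i
  fin_cases i <;>
    simp [cross, crossProduct, Matrix.mulVec, Matrix.adjugate_fin_three, dotProduct,
      Fin.sum_univ_three, Matrix.transpose_apply] <;> ring

lemma rot_adj {R : M3} (h : isRot R) : R.adjugate = Rᵀ := by
  have h1 : R * R.adjugate = 1 := by rw [Matrix.mul_adjugate, h.2, one_smul]
  calc R.adjugate = (Rᵀ * R) * R.adjugate := by rw [h.1, one_mul]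
    _ = Rᵀ * (R * R.adjugate) := by rw [Matrix.mul_assoc]
    _ = Rᵀ := by rw [h1, mul_one]

lemma rot_cross {R : M3} (h : isRot R) (x y : V3) :
    Rᵀ.mulVec (cross x y) = cross (Rᵀ.mulVec x) (Rᵀ.mulVec y) := by
  rw [cross_adj]
  rw [← Matrix.adjugate_transpose, rot_adj h, Matrix.transpose_transpose]

lemma colV_mul (R : M3) (v : V3) : R * colV v = colV (R.mulVec v) := by
  ext i j
  simp [colV, Matrix.mul_apply, Matrix.mulVec, dotProduct]

lemma colV_zero : colV 0 = 0 := by ext i j; simp [colV]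

lemma colV_add (a b : V3) : colV (a + b) = colV a + colV b := by ext i j; simp [colV]

lemma SE3_mul (R R' : M3) (p p' : V3) :
    SE3mat R p * SE3mat R' p' = SE3mat (R * R') (R.mulVec p' + p) := by
  simp [SE3mat, Matrix.fromBlocks_multiply, colV_mul, colV_add]

lemma SE3_one : SE3mat 1 0 = 1 := by
  rw [SE3mat, colV_zero, Matrix.fromBlocks_one]

lemma SE3_inv {R : M3} (p : V3) (h : isRot R) :
    (SE3mat R p)⁻¹ = SE3mat Rᵀ (-(Rᵀ.mulVec p)) := by
  apply Matrix.inv_eq_right_inv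
  rw [SE3_mul, Matrix.mulVec_neg, Matrix.mulVec_mulVec, mul_eq_one_comm.mpr h.1,
    Matrix.one_mulVec, neg_add_cancel, SE3_one]

lemma SE3_mulVec_vpart (R : M3) (p : V3) (x : V4) :
    vpart ((SE3mat R p).mulVec x) = R.mulVec (vpart x) + spart x • p := by
  funext i
  simp [vpart, spart, SE3mat, Matrix.mulVec, dotProduct, Fintype.sum_sum_type, colV,
    mul_comm]

lemma SE3_mulVec_spart (R : M3) (p : V3) (x : V4) :
    spart ((SE3mat R p).mulVec x) = spart x := by
  simp [vpart, spart, SE3mat, Matrix.mulVec, dotProduct, Fintype.sum_sum_type, colV]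

lemma crossid1 (a p rv : V3) (bs rs : ℝ) :
    cross (a + bs • p) rv - cross p (bs • rv - rs • (a + bs • p))
      = cross a rv + rs • cross p a := by
  funext i; fin_cases i <;>
    simp [cross, crossProduct, Pi.add_apply, Pi.sub_apply, Pi.smul_apply, smul_eq_mul] <;> ring

lemma crossid2 (bv c q : V3) (rs : ℝ) :
    cross bv c + rs • cross q bv = cross bv (c + rs • (-q)) := by
  funext i; fin_cases i <;>
    simp [cross, crossProduct, Pi.add_apply, Pi.neg_apply, Pi.smul_apply, smul_eq_mul] <;> ring

lemma vid (bv c q : V3) (bs rs : ℝ) :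
    bs • c - rs • (bv + bs • q) = bs • (c + rs • (-q)) - rs • bv := by
  funext i;
    simp [Pi.add_apply, Pi.sub_apply, Pi.neg_apply, Pi.smul_apply, smul_eq_mul]; ring

lemma key {R : M3} {p : V3} (h : isRot R) (b r : V4) :
    AdStar (SE3mat R p) (wedge ((SE3mat R p).mulVec b) r)
      = wedge b ((SE3mat R p)⁻¹.mulVec r) := by
  have hfun : (fun i => (SE3mat R p) (Sum.inl i) (Sum.inr 0)) = p := by
    funext i; simp [SE3mat, colV]
  have hRR : ∀ v : V3, Rᵀ.mulVec (R.mulVec v) = v := fun v => by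
    rw [Matrix.mulVec_mulVec, h.1, Matrix.one_mulVec]
  unfold AdStar wedge
  rw [hfun, SE3_mulVec_vpart, SE3_mulVec_spart, SE3_inv p h, SE3_mulVec_vpart,
    SE3_mulVec_spart]
  simp only [SE3mat, Matrix.toBlocks_fromBlocks₁₁]
  refine Prod.ext ?_ ?_
  · show Rᵀ.mulVec _ = _
    rw [crossid1, Matrix.mulVec_add, Matrix.mulVec_smul, rot_cross h, rot_cross h, hRR]
    exact crossid2 _ _ _ _
  · show Rᵀ.mulVec _ = _
    rw [Matrix.mulVec_sub, Matrix.mulVec_smul, Matrix.mulVec_smul, Matrix.mulVec_add,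
      Matrix.mulVec_smul, hRR]
    exact vid _ _ _ _ _

def AdStarL (g : M4) : V6 →ₗ[ℝ] V6 where
  toFun := AdStar g
  map_add' ξ η := by
    unfold AdStar
    refine Prod.ext ?_ ?_ <;> funext i <;>
      simp [cross, crossProduct, Matrix.mulVec, dotProduct, Fin.sum_univ_three,
        Matrix.vecHead, Matrix.vecTail, Pi.add_apply, Pi.sub_apply] <;> ring
  map_smul' c ξ := by
    unfold AdStar
    refine Prod.ext ?_ ?_ <;> funext i <;>
      simp [cross, crossProduct, Matrix.mulVec, dotProduct, Fin.sum_univ_three,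
        Matrix.vecHead, Matrix.vecTail, Pi.smul_apply, Pi.sub_apply, smul_eq_mul] <;> ring


theorem stmt6 (n : ℕ) (k : Fin n → ℝ) (hk : ∀ i, 0 < k i) (r : Fin n → V4) :
    ∀ g gbar : M4, inSE3 g → inSE3 gbar →
      AdStar gbar (∑ i, k i • wedge ((gbar * g⁻¹).mulVec (r i)) (r i))
        = ∑ i, k i • wedge (g⁻¹.mulVec (r i)) (gbar⁻¹.mulVec (r i)) := by
  intro g gbar hg hgbar
  obtain ⟨R, p, hR, rfl⟩ := hgbar
  have : ∀ ξ : V6, AdStar (SE3mat R p) ξ = AdStarL (SE3mat R p) ξ := fun _ => rfl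
  rw [this, map_sum]
  refine Finset.sum_congr rfl fun i _ => ?_
  rw [_root_.map_smul, ← this]
  congr 1
  rw [← Matrix.mulVec_mulVec]
  exact key hR _ _
end
end

section
/- Let 𝔸 be a symmetric real 4×4 matrix. Then for every g ∈ SE(3) and every X ∈ se(3), tr(g X 𝔸 (g − I₄)ᵀ) = tr(ℙ((I₄ − g⁻¹) 𝔸)ᵀ X). (This identifies the differential of the function U(g) = ½ tr((I₄ − g)𝔸(I₄ − g)ᵀ) in the direction gX with the Frobenius inner product of ℙ((I₄ − g⁻¹)𝔸) and X.) -/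
open Matrix BigOperators

noncomputable section

/-!
Since `Ω` is skew, `ℙ` can be dropped when paired with `X = [Ω, v; 0, 0]`, and cyclicity of the
trace together with `Aᵀ = A` puts both sides in the form `tr(M X A)`, with `M = (g - I)ᵀ g` on the
left and `M = (I - g⁻¹)ᵀ` on the right. For `g = [R, p; 0, 1]` with `RᵀR = I` these two matrices
agree except in their last column, and that column is annihilated by `X`, whose last row vanishes.
-/

namespace Matrix

variable {m n α : Type*} [Fintype m] [Fintype n] [CommRing α]

lemma trace_transpose_mul_fromBlocks_zero₂ (N₁ : Matrix m m α) (N₂ : Matrix m n α)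
    (N₃ : Matrix n m α) (N₄ : Matrix n n α) (Ω : Matrix m m α) (V : Matrix m n α) :
    ((fromBlocks N₁ N₂ N₃ N₄)ᵀ * fromBlocks Ω V 0 0).trace
      = (N₁ᵀ * Ω).trace + (N₂ᵀ * V).trace := by
  simp [fromBlocks_transpose, fromBlocks_multiply, trace, Fintype.sum_sum_type]

lemma trace_mul_eq_neg_trace_transpose_mul {N Ω : Matrix m m α} (hΩ : Ωᵀ = -Ω) :
    (N * Ω).trace = -(Nᵀ * Ω).trace := by
  rw [← trace_transpose, transpose_mul, hΩ, Matrix.neg_mul, trace_neg, trace_mul_comm]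

variable [DecidableEq m] [DecidableEq n]

lemma inv_fromBlocks_zero₂₁_one {R : Matrix m m α} (hR : Rᵀ * R = 1) (P : Matrix m n α) :
    (fromBlocks R P 0 (1 : Matrix n n α))⁻¹ = fromBlocks Rᵀ (-(Rᵀ * P)) 0 1 := by
  have hRunit : IsUnit R := (isUnit_iff_isUnit_det R).mpr (isUnit_det_of_left_inverse hR)
  rw [inv_fromBlocks_zero₂₁_of_isUnit_iff _ _ _ (by simp [hRunit]), inv_eq_left_inv hR, inv_one,
    Matrix.mul_one]

lemma transpose_sub_one_mul_self_mul_fromBlocks_zero₂ {R : Matrix m m α} (hR : Rᵀ * R = 1)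
    (P : Matrix m n α) (Ω : Matrix m m α) (V : Matrix m n α) :
    (fromBlocks R P 0 (1 : Matrix n n α) - 1)ᵀ * fromBlocks R P 0 1 * fromBlocks Ω V 0 0
      = (1 - (fromBlocks R P 0 1)⁻¹)ᵀ * fromBlocks Ω V 0 0 := by
  rw [inv_fromBlocks_zero₂₁_one hR, ← fromBlocks_one]
  simp only [sub_eq_add_neg, fromBlocks_neg, fromBlocks_add, fromBlocks_transpose,
    fromBlocks_multiply]
  congr 1 <;> simp [Matrix.add_mul, hR]

end Matrix

lemma trace_Pproj_transpose_mul (M : M4) {Ω : M3} (hΩ : Ωᵀ = -Ω) (V : Matrix (Fin 3) (Fin 1) ℝ) :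
    ((Pproj M)ᵀ * fromBlocks Ω V 0 0).trace = (Mᵀ * fromBlocks Ω V 0 0).trace := by
  conv_rhs => rw [← fromBlocks_toBlocks M]
  rw [Pproj, trace_transpose_mul_fromBlocks_zero₂, trace_transpose_mul_fromBlocks_zero₂,
    transpose_smul, transpose_sub, transpose_transpose, Matrix.smul_mul, Matrix.sub_mul,
    trace_smul, trace_sub, trace_mul_eq_neg_trace_transpose_mul (N := M.toBlocks₁₁) hΩ,
    smul_eq_mul]
  ring

theorem stmt8 (A : M4) (hsym : Aᵀ = A) :
    ∀ g : M4, inSE3 g → ∀ (Ω : M3) (v : V3), Ωᵀ = -Ω →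
      (g * Matrix.fromBlocks Ω (colV v) 0 0 * A * (g - 1)ᵀ).trace
        = ((Pproj ((1 - g⁻¹) * A))ᵀ * Matrix.fromBlocks Ω (colV v) 0 0).trace := by
  rintro g ⟨R, p, ⟨hR, -⟩, rfl⟩ Ω v hΩ
  set X : M4 := fromBlocks Ω (colV v) 0 0
  calc (SE3mat R p * X * A * (SE3mat R p - 1)ᵀ).trace
      = ((SE3mat R p - 1)ᵀ * SE3mat R p * X * A).trace := by
        rw [trace_mul_comm]
        simp only [Matrix.mul_assoc]
    _ = ((1 - (SE3mat R p)⁻¹)ᵀ * X * A).trace := by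
        rw [SE3mat, transpose_sub_one_mul_self_mul_fromBlocks_zero₂ hR]
    _ = (((1 - (SE3mat R p)⁻¹) * A)ᵀ * X).trace := by
        rw [transpose_mul, hsym, Matrix.mul_assoc A, trace_mul_comm A]
    _ = ((Pproj ((1 - (SE3mat R p)⁻¹) * A))ᵀ * X).trace :=
        (trace_Pproj_transpose_mul _ hΩ _).symm
end
end

section
/- For every g ∈ SE(3) and every r ∈ ℝ⁴, ψ((I₄ − g) r rᵀ) = ½ (g r) ∧ r. -/
open Matrix BigOperators

noncomputable section

theorem stmt12 :
    ∀ g : M4, inSE3 g → ∀ r : V4,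
      psi ((1 - g) * Matrix.vecMulVec r r) = (1 / 2 : ℝ) • wedge (g.mulVec r) r := by
  rintro g ⟨R, p, -, rfl⟩ r
  have h : ∀ P Q : V3, P = Q → ∀ x y : V3, x = y → ((P,x) : V6) = (Q,y) := by
    rintro P Q rfl x y rfl; rfl
  refine h _ _ ?_ _ _ ?_ <;> funext i <;> fin_cases i <;>
    simp [psi, psia, wedge, cross, crossProduct, vpart, spart, SE3mat, colV,
      Matrix.mul_apply, Matrix.mulVec, Matrix.vecMulVec, Matrix.toBlocks₁₁,
      Matrix.fromBlocks, dotProduct, Fintype.sum_sum_type, Fin.sum_univ_three,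
      Matrix.one_apply] <;> ring
end
end

section
/- For every g ∈ SE(3) and every M ∈ 𝓜₀, ℙ(g M) = ℙ(g⁻ᵀ M). -/
open Matrix BigOperators

noncomputable section

lemma mul_colV (A : M3) (v : V3) : A * colV v = colV (A.mulVec v) := by
  ext i j
  simp [colV, Matrix.mul_apply, Matrix.mulVec, dotProduct]

lemma inv_SE3 (R : M3) (p : V3) (hR : isRot R) :
    (SE3mat R p)⁻¹ = Matrix.fromBlocks Rᵀ (colV (-(Rᵀ.mulVec p))) 0 1 := by
  apply Matrix.inv_eq_right_inv
  have hRR : R * Rᵀ = 1 := by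
    rw [mul_eq_one_comm]; exact hR.1
  simp [SE3mat, Matrix.fromBlocks_multiply, mul_colV, Matrix.mulVec_neg,
    Matrix.mulVec_mulVec, hRR, ← Matrix.fromBlocks_one]
  ext i j
  simp [colV]

theorem stmt13 :
    ∀ g : M4, inSE3 g → ∀ M : M4, inM0 M →
      Pproj (g * M) = Pproj ((g⁻¹)ᵀ * M) := by
  rintro g ⟨R, p, hR, rfl⟩ M ⟨M₁, m₂, rfl⟩
  rw [inv_SE3 R p hR]
  unfold Pproj SE3mat
  simp [Matrix.fromBlocks_transpose, Matrix.fromBlocks_multiply]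
end
end

section
/- For every g ∈ SE(3) and every X ∈ se(3), ψ(gᵀ X g⁻ᵀ) = Ad*_g ψ(X). -/
open Matrix BigOperators

noncomputable section


lemma colV_mul_s15 (A : M3) (q : V3) : A * colV q = colV (A.mulVec q) := by
  ext i j
  simp [colV, Matrix.mul_apply, Matrix.mulVec, dotProduct]

theorem stmt15 :
    ∀ g : M4, inSE3 g → ∀ (Ω : M3) (v : V3), Ωᵀ = -Ω →
      psi (gᵀ * Matrix.fromBlocks Ω (colV v) 0 0 * (g⁻¹)ᵀ)
        = AdStar g (psi (Matrix.fromBlocks Ω (colV v) 0 0)) := by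
  rintro g ⟨R, p, ⟨hO, hD⟩, rfl⟩ Ω v hsk
  have hO' : R * Rᵀ = 1 := mul_eq_one_comm.mp hO
  -- Ω is a skew matrix
  obtain ⟨ω, rfl⟩ : ∃ ω : V3, Ω = skew ω := by
    refine ⟨![Ω 2 1, Ω 0 2, Ω 1 0], ?_⟩
    have h := fun a b : Fin 3 => congrFun (congrFun hsk a) b
    simp only [Matrix.transpose_apply, Matrix.neg_apply] at h
    ext i j
    fin_cases i <;> fin_cases j <;> simp [skew] <;>
      linarith [h 0 0, h 1 1, h 2 2, h 0 1, h 0 2, h 1 2]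
  -- inverse of g
  have hinv : (SE3mat R p)⁻¹ = SE3mat Rᵀ (-(Rᵀ.mulVec p)) := by
    apply Matrix.inv_eq_right_inv
    rw [SE3mat, SE3mat, Matrix.fromBlocks_multiply]
    have h1 : R * colV (-(Rᵀ.mulVec p)) + colV p * (1 : Matrix (Fin 1) (Fin 1) ℝ) = 0 := by
      rw [colV_mul_s15, Matrix.mul_one]
      ext i j
      simp [colV, Matrix.mulVec_neg, Matrix.mulVec_mulVec, hO']
    simp only [Matrix.mul_zero, Matrix.zero_mul, add_zero, zero_add, mul_one,
      one_mul, hO', h1]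
    exact Matrix.fromBlocks_one
  -- cofactor relations
  have hadj : R.adjugate = Rᵀ := by
    have h1 : R * R.adjugate = 1 := by rw [Matrix.mul_adjugate, hD, one_smul]
    calc R.adjugate = (Rᵀ * R) * R.adjugate := by rw [hO, one_mul]
      _ = Rᵀ * (R * R.adjugate) := by rw [mul_assoc]
      _ = Rᵀ := by rw [h1, mul_one]
  rw [Matrix.adjugate_fin_three] at hadj
  have e := fun a b : Fin 3 => congrFun (congrFun hadj a) b
  have e00 : R 1 1 * R 2 2 - R 1 2 * R 2 1 = R 0 0 := by simpa using e 0 0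
  have e10 : -(R 0 1 * R 2 2) + R 0 2 * R 2 1 = R 1 0 := by simpa using e 0 1
  have e20 : R 0 1 * R 1 2 - R 0 2 * R 1 1 = R 2 0 := by simpa using e 0 2
  have e01 : -(R 1 0 * R 2 2) + R 1 2 * R 2 0 = R 0 1 := by simpa using e 1 0
  have e11 : R 0 0 * R 2 2 - R 0 2 * R 2 0 = R 1 1 := by simpa using e 1 1
  have e21 : -(R 0 0 * R 1 2) + R 0 2 * R 1 0 = R 2 1 := by simpa using e 1 2
  have e02 : R 1 0 * R 2 1 - R 1 1 * R 2 0 = R 0 2 := by simpa using e 2 0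
  have e12 : -(R 0 0 * R 2 1) + R 0 1 * R 2 0 = R 1 2 := by simpa using e 2 1
  have e22 : R 0 0 * R 1 1 - R 0 1 * R 1 0 = R 2 2 := by simpa using e 2 2
  rw [hinv, SE3mat, SE3mat]
  rw [Matrix.fromBlocks_transpose, Matrix.fromBlocks_transpose,
    Matrix.fromBlocks_multiply, Matrix.fromBlocks_multiply]
  rw [Prod.ext_iff]
  constructor
  · funext i
    simp only [psi, AdStar, Matrix.toBlocks_fromBlocks₁₁, Matrix.fromBlocks_apply₁₂,
      psia, cross, crossProduct, skew, colV, Matrix.transpose_zero, Matrix.transpose_one]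
    fin_cases i <;>
      simp [Matrix.mul_apply, Matrix.mulVec, dotProduct, Fin.sum_univ_three,
        Matrix.transpose_apply, colV, Matrix.add_apply, Matrix.neg_apply] <;>
    [ linear_combination (ω 0 - (p 1 * v 2 - p 2 * v 1)/2) * e00
        + (ω 1 - (p 2 * v 0 - p 0 * v 2)/2) * e10
        + (ω 2 - (p 0 * v 1 - p 1 * v 0)/2) * e20;
      linear_combination (ω 0 - (p 1 * v 2 - p 2 * v 1)/2) * e01
        + (ω 1 - (p 2 * v 0 - p 0 * v 2)/2) * e11
        + (ω 2 - (p 0 * v 1 - p 1 * v 0)/2) * e21;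
      linear_combination (ω 0 - (p 1 * v 2 - p 2 * v 1)/2) * e02
        + (ω 1 - (p 2 * v 0 - p 0 * v 2)/2) * e12
        + (ω 2 - (p 0 * v 1 - p 1 * v 0)/2) * e22 ]
  · funext i
    simp only [psi, AdStar, Matrix.toBlocks_fromBlocks₁₁, Matrix.fromBlocks_apply₁₂,
      Matrix.transpose_zero, Matrix.transpose_one]
    fin_cases i <;>
      simp [Matrix.mul_apply, Matrix.mulVec, dotProduct, Fin.sum_univ_three,
        Matrix.transpose_apply, colV] <;> ring
end
end

section
/- Let Q be a symmetric 3×3 real matrix and Q̄ := ½(tr(Q) I₃ − Q), with smallest and largest eigenvalues λ_min(Q̄) and λ_max(Q̄). Then for every rotation matrix R ∈ SO(3), ½ λ_min(Q̄) ‖I₃ − R‖_F² ≤ tr(Q (I₃ − R)) ≤ ½ λ_max(Q̄) ‖I₃ − R‖_F². -/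
open Matrix BigOperators

noncomputable section

/-!
For a rotation `R` put `D = R + Rᵀ - (tr R - 1) I`. Since `Rᵀ = adj R`, Cayley–Hamilton gives
`D R = D`, hence `D² = (tr D) D`, so the symmetric matrix `D` is positive semidefinite.
Moreover `tr (Q (I - R)) = tr (Q̄ D)` and `‖I - R‖_F² = 2 tr D`, so the two bounds say
`tr ((Q̄ - λ_min I) D) ≥ 0` and `tr ((λ_max I - Q̄) D) ≥ 0`: both are traces of products of
positive semidefinite matrices.
-/

namespace Matrix

variable {n : Type*} [Fintype n]

/-- For symmetric `B`, `tr (A * B)` is the sum of the entries of `A ⊙ B`, which is positive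
semidefinite by the Schur product theorem. -/
theorem PosSemidef.trace_mul_nonneg {A B : Matrix n n ℝ} (hA : A.PosSemidef) (hB : B.PosSemidef) :
    0 ≤ (A * B).trace := by
  have h := (hA.hadamard hB).dotProduct_mulVec_nonneg 1
  have hBt : Bᵀ = B := by simpa using hB.isHermitian.eq
  calc (0 : ℝ) ≤ star 1 ⬝ᵥ ((A ⊙ B) *ᵥ 1) := h
  _ = (A * B).trace := by
    simp only [star_trivial, trace, diag, mul_apply, dotProduct, mulVec, hadamard_apply,
      Pi.one_apply, one_mul, mul_one]
    refine Finset.sum_congr rfl fun i _ => Finset.sum_congr rfl fun j _ => ?_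
    rw [← hBt, transpose_apply, hBt]

theorem posSemidef_of_mul_self_eq_smul {D : Matrix n n ℝ} (hD : Dᵀ = D) {τ : ℝ} (hτ : 0 ≤ τ)
    (hDD : D * D = τ • D) : D.PosSemidef := by
  rcases hτ.eq_or_lt with rfl | hτ
  · have : Dᴴ * D = 0 := by rw [conjTranspose_eq_transpose_of_trivial, hD, hDD, zero_smul]
    rw [conjTranspose_mul_self_eq_zero.mp this]
    exact PosSemidef.zero
  · have : D = τ⁻¹ • (Dᴴ * D) := by
      rw [conjTranspose_eq_transpose_of_trivial, hD, hDD, smul_smul, inv_mul_cancel₀ hτ.ne',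
        one_smul]
    rw [this]
    exact (posSemidef_conjTranspose_mul_self D).smul (inv_nonneg.mpr hτ.le)

theorem adjugate_fin_three_eq_mul_self_sub {R : Type*} [CommRing R]
    (A : Matrix (Fin 3) (Fin 3) R) :
    adjugate A = A * A - A.trace • A + (adjugate A).trace • 1 := by
  ext i j
  fin_cases i <;> fin_cases j <;>
    simp [adjugate_fin_three, trace_fin_three, mul_apply, Fin.sum_univ_three] <;> ring

variable [DecidableEq n]

theorem IsHermitian.posSemidef_sub_smul_one_of_le_eigenvalues {A : Matrix n n ℝ}
    (hA : A.IsHermitian) {c : ℝ}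
    (h : ∀ (μ : ℝ) (w : n → ℝ), w ≠ 0 → A *ᵥ w = μ • w → c ≤ μ) : (A - c • 1).PosSemidef := by
  have hB : (A - c • 1).IsHermitian := hA.sub (isHermitian_one.smul (IsSelfAdjoint.all c))
  rw [hB.posSemidef_iff_eigenvalues_nonneg]
  intro i
  set e := ⇑(hB.eigenvectorBasis i)
  have he : e ≠ 0 := fun h0 =>
    (hB.eigenvectorBasis.orthonormal.ne_zero i) (by ext j; exact congrFun h0 j)
  have hAe : A *ᵥ e = (hB.eigenvalues i + c) • e := by
    have := hB.mulVec_eigenvectorBasis i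
    rw [sub_mulVec, smul_mulVec, one_mulVec, sub_eq_iff_eq_add] at this
    rw [this, add_smul]
  simpa using h _ e he hAe

theorem IsHermitian.posSemidef_smul_one_sub_of_eigenvalues_le {A : Matrix n n ℝ}
    (hA : A.IsHermitian) {c : ℝ}
    (h : ∀ (μ : ℝ) (w : n → ℝ), w ≠ 0 → A *ᵥ w = μ • w → μ ≤ c) : (c • 1 - A).PosSemidef := by
  have := hA.neg.posSemidef_sub_smul_one_of_le_eigenvalues (c := -c) fun μ w hw hAw => by
    have := h (-μ) w hw (by rw [neg_smul, ← hAw, neg_mulVec, neg_neg])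
    linarith
  rwa [neg_smul, sub_neg_eq_add, neg_add_eq_sub] at this

end Matrix

/-- For `R = exp (θ u^×)` with `‖u‖ = 1` this is `2 (1 - cos θ) u uᵀ`. -/
def axisMatrix (R : M3) : M3 := R + Rᵀ - (R.trace - 1) • 1

theorem axisMatrix_transpose (R : M3) : (axisMatrix R)ᵀ = axisMatrix R := by
  simp only [axisMatrix, transpose_sub, transpose_add, transpose_transpose, transpose_smul,
    transpose_one, add_comm]

theorem trace_axisMatrix (R : M3) : (axisMatrix R).trace = 3 - R.trace := by
  simp only [axisMatrix, trace_sub, trace_add, trace_transpose, trace_smul, trace_one,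
    Fintype.card_fin, smul_eq_mul]
  ring

theorem trace_mul_one_sub_eq_trace_mul_axisMatrix {Q : M3} (hQ : Qᵀ = Q) (R : M3) :
    (Q * (1 - R)).trace = ((1 / 2 : ℝ) • (Q.trace • (1 : M3) - Q) * axisMatrix R).trace := by
  have hQR : (Q * Rᵀ).trace = (Q * R).trace := by
    rw [← trace_transpose, transpose_mul, transpose_transpose, hQ, trace_mul_comm]
  simp only [axisMatrix, Matrix.mul_sub, Matrix.mul_add, Matrix.sub_mul, Matrix.mul_one, smul_mul,
    Matrix.one_mul, Matrix.mul_smul, trace_sub, trace_add, trace_smul, hQR, trace_transpose,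
    trace_one, Fintype.card_fin, smul_eq_mul]
  ring

namespace isRot

variable {R : M3}

theorem mul_transpose (hR : isRot R) : R * Rᵀ = 1 := mul_eq_one_comm.mp hR.1

theorem transpose_eq_adjugate (hR : isRot R) : Rᵀ = adjugate R := by
  calc Rᵀ = (adjugate R * R) * Rᵀ := by rw [adjugate_mul, hR.2, one_smul, Matrix.one_mul]
  _ = adjugate R := by rw [Matrix.mul_assoc, hR.mul_transpose, Matrix.mul_one]

theorem transpose_eq_mul_self_sub (hR : isRot R) : Rᵀ = R * R - R.trace • R + R.trace • 1 := by
  have h := adjugate_fin_three_eq_mul_self_sub R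
  rwa [← hR.transpose_eq_adjugate, trace_transpose] at h

theorem axisMatrix_mul (hR : isRot R) : axisMatrix R * R = axisMatrix R := by
  have hRR : R * R = Rᵀ + R.trace • R - R.trace • 1 := by
    rw [hR.transpose_eq_mul_self_sub]; abel
  simp only [axisMatrix, Matrix.add_mul, Matrix.sub_mul, smul_mul, Matrix.one_mul, hR.1, hRR]
  module

theorem axisMatrix_mul_transpose (hR : isRot R) : axisMatrix R * Rᵀ = axisMatrix R := by
  conv_lhs => rw [← hR.axisMatrix_mul, Matrix.mul_assoc, hR.mul_transpose, Matrix.mul_one]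

theorem axisMatrix_mul_self (hR : isRot R) :
    axisMatrix R * axisMatrix R = (3 - R.trace) • axisMatrix R := by
  change axisMatrix R * (R + Rᵀ - (R.trace - 1) • 1) = _
  simp only [Matrix.mul_add, Matrix.mul_sub, Matrix.mul_smul, Matrix.mul_one, hR.axisMatrix_mul,
    hR.axisMatrix_mul_transpose]
  module

theorem frob3_one_sub (hR : isRot R) : frob3 (1 - R) = 2 * (3 - R.trace) := by
  have : frob3 (1 - R) = ((1 - R)ᵀ * (1 - R)).trace := by
    simp only [frob3, trace, diag, mul_apply, transpose_apply, sq]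
    exact Finset.sum_comm
  rw [this, transpose_sub, transpose_one, Matrix.sub_mul, Matrix.mul_sub, Matrix.mul_sub, hR.1]
  simp only [Matrix.one_mul, Matrix.mul_one, trace_sub, trace_transpose, trace_one,
    Fintype.card_fin]
  ring

theorem trace_le_three (hR : isRot R) : R.trace ≤ 3 := by
  have : 0 ≤ frob3 (1 - R) := by unfold frob3; positivity
  linarith [hR.frob3_one_sub]

theorem posSemidef_axisMatrix (hR : isRot R) : (axisMatrix R).PosSemidef :=
  posSemidef_of_mul_self_eq_smul (axisMatrix_transpose R) (by linarith [hR.trace_le_three])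
    hR.axisMatrix_mul_self

end isRot

theorem stmt17_general (Q : M3) (hsym : Qᵀ = Q)
    (Qbar : M3) (hQbar : Qbar = (1 / 2 : ℝ) • (Q.trace • (1 : M3) - Q))
    (lmin lmax : ℝ)
    (hmin : ∀ (μ : ℝ) (w : V3), w ≠ 0 → Qbar.mulVec w = μ • w → lmin ≤ μ)
    (hmax : ∀ (μ : ℝ) (w : V3), w ≠ 0 → Qbar.mulVec w = μ • w → μ ≤ lmax) :
    ∀ R : M3, isRot R →
      (1 / 2 : ℝ) * lmin * frob3 (1 - R) ≤ (Q * (1 - R)).trace ∧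
      (Q * (1 - R)).trace ≤ (1 / 2 : ℝ) * lmax * frob3 (1 - R) := by
  intro R hR
  have hQbar_herm : Qbar.IsHermitian := by
    rw [IsHermitian, conjTranspose_eq_transpose_of_trivial, hQbar]
    simp only [transpose_smul, transpose_sub, transpose_one, hsym]
  have hlow := (hQbar_herm.posSemidef_sub_smul_one_of_le_eigenvalues hmin).trace_mul_nonneg
    hR.posSemidef_axisMatrix
  have hupp := (hQbar_herm.posSemidef_smul_one_sub_of_eigenvalues_le hmax).trace_mul_nonneg
    hR.posSemidef_axisMatrix
  simp only [Matrix.sub_mul, trace_sub, smul_mul, trace_smul, Matrix.one_mul, trace_axisMatrix,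
    smul_eq_mul] at hlow hupp
  rw [trace_mul_one_sub_eq_trace_mul_axisMatrix hsym R, ← hQbar, hR.frob3_one_sub]
  constructor <;> linarith

theorem stmt17 (Q : M3) (hsym : Qᵀ = Q)
    (Qbar : M3) (hQbar : Qbar = (1 / 2 : ℝ) • (Q.trace • (1 : M3) - Q))
    (lmin lmax : ℝ)
    (hmin_eig : ∃ w : V3, w ≠ 0 ∧ Qbar.mulVec w = lmin • w)
    (hmin : ∀ (μ : ℝ) (w : V3), w ≠ 0 → Qbar.mulVec w = μ • w → lmin ≤ μ)
    (hmax_eig : ∃ w : V3, w ≠ 0 ∧ Qbar.mulVec w = lmax • w)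
    (hmax : ∀ (μ : ℝ) (w : V3), w ≠ 0 → Qbar.mulVec w = μ • w → μ ≤ lmax) :
    ∀ R : M3, isRot R →
      (1 / 2 : ℝ) * lmin * frob3 (1 - R) ≤ (Q * (1 - R)).trace ∧
      (Q * (1 - R)).trace ≤ (1 / 2 : ℝ) * lmax * frob3 (1 - R) :=
  stmt17_general Q hsym Qbar hQbar lmin lmax hmin hmax
end
end
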